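/- arXiv:2605.17464 — 5 statements merged into one kernel-verified Lean document; each statement's English description precedes it below -/
import Mathlib

section
/- Let d ∈ ℕ, let M and K be symmetric real d×d matrices, let Δt > 0, and let U : ℕ → ℝ^d satisfy the leapfrog recursion M·(U(n+1) − 2·U(n) + U(n−1)) + Δt²·K·U(n) = 0 for all n ≥ 1. For n ≥ 0 define D(n) = (U(n+1) − U(n))/Δt and the discrete energy E(n) = (1/2)·⟨M·D(n), D(n)⟩ + (1/4)·⟨K·U(n+1), U(n+1)⟩ + (1/4)·⟨K·U(n), U(n)⟩ − (Δt²/4)·⟨K·D(n), D(n)⟩, where ⟨·,·⟩ is the Euclidean inner product on ℝ^d. Then E(n) = E(n−1) for every n ≥ 1. -/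
/-!
Eliminating the difference quotients and using the symmetry of `K`, the energy of the pair
`(U (n + 1), U n)` is `⟨M (U (n + 1) - U n), U (n + 1) - U n⟩ / (2 Δt²) + ⟨K U (n + 1), U n⟩ / 2`.
Since `M` is symmetric, `2 Δt²` times the change of this quantity over one step is the residual of
the recursion at `n`, tested against `U (n + 1) - U (n - 1)`; hence it vanishes.
-/

open Matrix

section

variable {ι R : Type*} [Fintype ι]

theorem Matrix.IsSymm.mulVec_dotProduct_comm [CommSemiring R] {A : Matrix ι ι R}
    (hA : A.IsSymm) (x y : ι → R) : A *ᵥ x ⬝ᵥ y = A *ᵥ y ⬝ᵥ x := by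
  rw [dotProduct_comm, dotProduct_mulVec, ← mulVec_transpose, hA.eq]

theorem Matrix.IsSymm.mulVec_sub_dotProduct_sub [CommRing R] {A : Matrix ι ι R}
    (hA : A.IsSymm) (x y : ι → R) :
    A *ᵥ (x - y) ⬝ᵥ (x - y) = A *ᵥ x ⬝ᵥ x + A *ᵥ y ⬝ᵥ y - 2 * (A *ᵥ x ⬝ᵥ y) := by
  simp only [mulVec_sub, sub_dotProduct, dotProduct_sub, hA.mulVec_dotProduct_comm y x]
  ring

theorem Matrix.IsSymm.mulVec_dotProduct_sub_mulVec_dotProduct [CommRing R] {A : Matrix ι ι R}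
    (hA : A.IsSymm) (x y : ι → R) :
    A *ᵥ x ⬝ᵥ x - A *ᵥ y ⬝ᵥ y = A *ᵥ (x - y) ⬝ᵥ (x + y) := by
  simp only [mulVec_sub, sub_dotProduct, dotProduct_add, hA.mulVec_dotProduct_comm y x]
  ring

variable [Field R]

/-- The discrete energy at time `n`, with `u = U (n + 1)` and `v = U n`. -/
def leapfrogEnergy (M K : Matrix ι ι R) (Δt : R) (u v : ι → R) : R :=
  (2 * Δt ^ 2)⁻¹ * (M *ᵥ (u - v) ⬝ᵥ (u - v)) + 2⁻¹ * (K *ᵥ u ⬝ᵥ v)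

theorem leapfrogEnergy_eq [NeZero (2 : R)] (M : Matrix ι ι R) {K : Matrix ι ι R}
    (hK : K.IsSymm) {Δt : R} (hΔt : Δt ≠ 0) (u v : ι → R) :
    leapfrogEnergy M K Δt u v =
      (1 / 2) * (M *ᵥ (Δt⁻¹ • (u - v)) ⬝ᵥ Δt⁻¹ • (u - v))
        + (1 / 4) * (K *ᵥ u ⬝ᵥ u) + (1 / 4) * (K *ᵥ v ⬝ᵥ v)
        - (Δt ^ 2 / 4) * (K *ᵥ (Δt⁻¹ • (u - v)) ⬝ᵥ Δt⁻¹ • (u - v)) := by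
  simp only [leapfrogEnergy, mulVec_smul, smul_dotProduct, dotProduct_smul, smul_eq_mul,
    hK.mulVec_sub_dotProduct_sub]
  have h4 : (4 : R) ≠ 0 := by simpa [show (4 : R) = 2 * 2 by norm_num] using two_ne_zero
  field_simp
  ring

theorem leapfrogEnergy_eq_of_step [NeZero (2 : R)] {M K : Matrix ι ι R} (hM : M.IsSymm)
    (hK : K.IsSymm) {Δt : R} (hΔt : Δt ≠ 0) {u v w : ι → R}
    (hstep : M *ᵥ (u - (2 : R) • v + w) + Δt ^ 2 • K *ᵥ v = 0) :
    leapfrogEnergy M K Δt u v = leapfrogEnergy M K Δt v w := by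
  have hdiff : 2 * Δt ^ 2 * (leapfrogEnergy M K Δt u v - leapfrogEnergy M K Δt v w) =
      (M *ᵥ (u - (2 : R) • v + w) + Δt ^ 2 • K *ᵥ v) ⬝ᵥ (u - w) := by
    have hM' := hM.mulVec_dotProduct_sub_mulVec_dotProduct (u - v) (v - w)
    rw [show u - v - (v - w) = u - (2 : R) • v + w by module,
      show u - v + (v - w) = u - w by abel] at hM'
    rw [add_dotProduct, ← hM', smul_dotProduct, dotProduct_sub (K *ᵥ v), smul_eq_mul,
      leapfrogEnergy, leapfrogEnergy, hK.mulVec_dotProduct_comm u v]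
    field_simp
    ring
  rw [hstep, zero_dotProduct, mul_eq_zero] at hdiff
  exact sub_eq_zero.1 (hdiff.resolve_left (mul_ne_zero two_ne_zero (pow_ne_zero 2 hΔt)))

end

/-- Energy conservation for the fully discrete leapfrog scheme
`M·(U^{n+1} − 2U^n + U^{n−1}) + Δt²·K·U^n = 0` with symmetric `M`, `K`. -/
theorem leapfrog_energy_conservation
    (d : ℕ) (M K : Matrix (Fin d) (Fin d) ℝ)
    (hM : M.IsSymm) (hK : K.IsSymm)
    (Δt : ℝ) (hΔt : 0 < Δt)
    (U : ℕ → Fin d → ℝ)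
    (hrec : ∀ n : ℕ, 1 ≤ n →
      M.mulVec (U (n + 1) - (2 : ℝ) • U n + U (n - 1))
        + (Δt ^ 2) • K.mulVec (U n) = 0)
    (D : ℕ → Fin d → ℝ)
    (hD : ∀ n : ℕ, D n = Δt⁻¹ • (U (n + 1) - U n))
    (E : ℕ → ℝ)
    (hE : ∀ n : ℕ, E n =
      (1 / 2) * (M.mulVec (D n) ⬝ᵥ D n)
        + (1 / 4) * (K.mulVec (U (n + 1)) ⬝ᵥ U (n + 1))
        + (1 / 4) * (K.mulVec (U n) ⬝ᵥ U n)
        - (Δt ^ 2 / 4) * (K.mulVec (D n) ⬝ᵥ D n)) :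
    ∀ n : ℕ, 1 ≤ n → E n = E (n - 1) := by
  have hE' (n : ℕ) : E n = leapfrogEnergy M K Δt (U (n + 1)) (U n) := by
    rw [hE, hD, leapfrogEnergy_eq M hK hΔt.ne']
  rintro (_ | n) hn
  · omega
  rw [hE', hE']
  exact leapfrogEnergy_eq_of_step hM hK hΔt.ne' (hrec (n + 1) hn)
end

section
/- Let d ∈ ℕ and let K₋, K₀, K₊ be real d×d matrices with K₋ᵀ = K₊ and K₀ᵀ = K₀. Suppose that for every finitely supported sequence u : ℤ → ℂ^d one has Re( Σ_{j∈ℤ} ⟨u(j), K₋·u(j−1) + K₀·u(j) + K₊·u(j+1)⟩ ) ≥ 0, where ⟨x, y⟩ = Σ_i conj(x_i)·y_i and the real matrices act on ℂ^d via their entrywise complex coercions. Then for every θ ∈ ℝ the complex d×d matrix 𝒦(θ) = K₀ + e^{−iθ}·K₋ + e^{iθ}·K₊ is Hermitian and positive semidefinite. -/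
open Matrix Complex ComplexOrder
open Finset

/-!
Test the block-tridiagonal form against the truncated plane wave `u j = e^{ijθ} x` for
`0 ≤ j ≤ n`. Every interior index contributes `x* 𝒦(θ) x` and the two ends lose one
off-diagonal term each, so the form equals `n · x* 𝒦(θ) x + x* K₀ x`. Its nonnegativity for all
`n` forces `Re (x* 𝒦(θ) x) ≥ 0`, and the imaginary part vanishes because `𝒦(θ)` is Hermitian.
-/

lemma nonneg_of_forall_nat_mul_add_nonneg {c r : ℝ} (h : ∀ n : ℕ, 0 ≤ n * c + r) : 0 ≤ c := by
  by_contra! hc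
  obtain ⟨n, hn⟩ := exists_nat_gt (r / -c)
  rw [div_lt_iff₀ (neg_pos.mpr hc)] at hn
  linarith [h n]

lemma star_exp_ofReal_mul_I (t : ℝ) : star (exp (t * I)) = exp (-t * I) := by
  rw [star_def, ← exp_conj, map_mul, conj_ofReal, conj_I, mul_neg, neg_mul]

lemma star_exp_mul_exp_add (θ : ℝ) (j k : ℤ) :
    star (exp (j * θ * I)) * exp (↑(j + k) * θ * I) = exp (k * θ * I) := by
  have hj : (j : ℂ) * θ * I = ((j * θ : ℝ) : ℂ) * I := by push_cast; ring
  rw [hj, star_exp_ofReal_mul_I, ← exp_add]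
  congr 1
  push_cast
  ring

section BlockToeplitz

variable {ι : Type*}

noncomputable def blockSymbol (A B C : Matrix ι ι ℂ) (θ : ℝ) : Matrix ι ι ℂ :=
  B + exp (-θ * I) • A + exp (θ * I) • C

lemma isHermitian_blockSymbol {A B C : Matrix ι ι ℂ} (hA : Aᴴ = C) (hB : Bᴴ = B) (θ : ℝ) :
    (blockSymbol A B C θ).IsHermitian := by
  have hC : Cᴴ = A := by rw [← hA, conjTranspose_conjTranspose]
  rw [IsHermitian, blockSymbol, conjTranspose_add, conjTranspose_add, conjTranspose_smul,
    conjTranspose_smul, hA, hB, hC, star_exp_ofReal_mul_I, ← ofReal_neg, star_exp_ofReal_mul_I,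
    ofReal_neg, neg_neg]
  abel

noncomputable def truncatedWave (θ : ℝ) (s : Finset ℤ) (x : ι → ℂ) (j : ℤ) : ι → ℂ :=
  if j ∈ s then exp (j * θ * I) • x else 0

lemma truncatedWave_of_notMem {θ : ℝ} {s : Finset ℤ} {x : ι → ℂ} {j : ℤ} (hj : j ∉ s) :
    truncatedWave θ s x j = 0 :=
  if_neg hj

lemma support_truncatedWave_subset (θ : ℝ) (s : Finset ℤ) (x : ι → ℂ) :
    Function.support (truncatedWave θ s x) ⊆ s :=
  Function.support_subset_iff'.mpr fun _ hj => truncatedWave_of_notMem hj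

variable [Fintype ι]

noncomputable def blockForm (A B C : Matrix ι ι ℂ) (u : ℤ → ι → ℂ) : ℂ :=
  ∑ᶠ j : ℤ, star (u j) ⬝ᵥ (A *ᵥ u (j - 1) + B *ᵥ u j + C *ᵥ u (j + 1))

lemma sum_star_truncatedWave_dotProduct_mulVec (M : Matrix ι ι ℂ) (θ : ℝ) (s : Finset ℤ)
    (x : ι → ℂ) (k : ℤ) :
    ∑ j ∈ s, star (truncatedWave θ s x j) ⬝ᵥ M *ᵥ truncatedWave θ s x (j + k)
      = #{j ∈ s | j + k ∈ s} • (exp (k * θ * I) * (star x ⬝ᵥ M *ᵥ x)) := by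
  have hterm : ∀ j ∈ s, star (truncatedWave θ s x j) ⬝ᵥ M *ᵥ truncatedWave θ s x (j + k)
      = if j + k ∈ s then exp (k * θ * I) * (star x ⬝ᵥ M *ᵥ x) else 0 := by
    intro j hj
    unfold truncatedWave
    split_ifs
    · rw [star_smul, mulVec_smul, smul_dotProduct, dotProduct_smul, smul_eq_mul, smul_eq_mul,
        ← mul_assoc, ← star_exp_mul_exp_add θ j k]
    · rw [mulVec_zero, dotProduct_zero]
  rw [Finset.sum_congr rfl hterm, Finset.sum_ite, Finset.sum_const_zero, add_zero,
    Finset.sum_const]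

lemma card_filter_add_one_mem_Ico (n : ℕ) :
    #{j ∈ Ico (0 : ℤ) (n + 1) | j + 1 ∈ Ico (0 : ℤ) (n + 1)} = n := by
  have : {j ∈ Ico (0 : ℤ) (n + 1) | j + 1 ∈ Ico (0 : ℤ) (n + 1)} = Ico 0 (n : ℤ) := by
    ext j; simp only [mem_filter, mem_Ico]; omega
  rw [this, Int.card_Ico]; omega

lemma card_filter_add_neg_one_mem_Ico (n : ℕ) :
    #{j ∈ Ico (0 : ℤ) (n + 1) | j + -1 ∈ Ico (0 : ℤ) (n + 1)} = n := by
  have : {j ∈ Ico (0 : ℤ) (n + 1) | j + -1 ∈ Ico (0 : ℤ) (n + 1)} = Ico 1 ((n : ℤ) + 1) := by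
    ext j; simp only [mem_filter, mem_Ico]; omega
  rw [this, Int.card_Ico]; omega

lemma star_dotProduct_blockSymbol_mulVec (A B C : Matrix ι ι ℂ) (θ : ℝ) (x : ι → ℂ) :
    star x ⬝ᵥ blockSymbol A B C θ *ᵥ x = star x ⬝ᵥ B *ᵥ x + exp (-θ * I) * (star x ⬝ᵥ A *ᵥ x)
      + exp (θ * I) * (star x ⬝ᵥ C *ᵥ x) := by
  simp only [blockSymbol, add_mulVec, smul_mulVec, dotProduct_add, dotProduct_smul, smul_eq_mul]

lemma blockForm_truncatedWave (A B C : Matrix ι ι ℂ) (θ : ℝ) (x : ι → ℂ) (n : ℕ) :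
    blockForm A B C (truncatedWave θ (Ico 0 ((n : ℤ) + 1)) x)
      = n * (star x ⬝ᵥ blockSymbol A B C θ *ᵥ x) + star x ⬝ᵥ B *ᵥ x := by
  have hdiag := sum_star_truncatedWave_dotProduct_mulVec B θ (Ico 0 ((n : ℤ) + 1)) x 0
  have hcard : #(Ico (0 : ℤ) (n + 1)) = n + 1 := by rw [Int.card_Ico]; omega
  simp only [add_zero, Int.cast_zero, zero_mul, exp_zero, one_mul,
    filter_true_of_mem fun _ h => h, hcard] at hdiag
  rw [blockForm, finsum_eq_sum_of_support_subset (s := Ico 0 ((n : ℤ) + 1)) _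
    (Function.support_subset_iff'.mpr fun j hj => by
      rw [truncatedWave_of_notMem hj, star_zero, zero_dotProduct])]
  simp only [sub_eq_add_neg, dotProduct_add, sum_add_distrib]
  rw [sum_star_truncatedWave_dotProduct_mulVec, sum_star_truncatedWave_dotProduct_mulVec, hdiag,
    card_filter_add_one_mem_Ico, card_filter_add_neg_one_mem_Ico,
    star_dotProduct_blockSymbol_mulVec]
  push_cast
  ring_nf

theorem posSemidef_blockSymbol {A B C : Matrix ι ι ℂ} (hA : Aᴴ = C) (hB : Bᴴ = B)
    (hform : ∀ u : ℤ → ι → ℂ, (Function.support u).Finite → 0 ≤ (blockForm A B C u).re)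
    (θ : ℝ) : (blockSymbol A B C θ).PosSemidef := by
  have hherm := isHermitian_blockSymbol hA hB θ
  refine .of_dotProduct_mulVec_nonneg hherm fun x => ?_
  refine Complex.nonneg_iff.mpr ⟨?_, (hherm.im_star_dotProduct_mulVec_self x).symm⟩
  refine nonneg_of_forall_nat_mul_add_nonneg (r := (star x ⬝ᵥ B *ᵥ x).re) fun n => ?_
  have hwave := hform _ ((finite_toSet _).subset
    (support_truncatedWave_subset θ (Ico 0 ((n : ℤ) + 1)) x))
  rwa [blockForm_truncatedWave, add_re, ← ofReal_natCast, re_ofReal_mul] at hwave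

end BlockToeplitz

lemma conjTranspose_map_ofReal {m n : Type*} (M : Matrix m n ℝ) :
    (M.map ofReal)ᴴ = Mᵀ.map ofReal := by
  rw [← conjTranspose_map _ fun r => (conj_ofReal r).symm, conjTranspose_eq_transpose_of_trivial]

/-- If the global block-tridiagonal quadratic form generated by real blocks
`K₋, K₀, K₊` (with `K₋ᵀ = K₊`, `K₀ᵀ = K₀`) is nonnegative on all finitely
supported sequences, then the Fourier symbol
`𝒦(θ) = K₀ + e^{−iθ}K₋ + e^{iθ}K₊` is Hermitian positive semidefinite. -/
theorem symbol_posSemidef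
    (d : ℕ) (Km K0 Kp : Matrix (Fin d) (Fin d) ℝ)
    (hKm : Kmᵀ = Kp) (hK0 : K0ᵀ = K0)
    (hpos : ∀ u : ℤ → Fin d → ℂ, (Function.support u).Finite →
      0 ≤ (∑ᶠ j : ℤ, star (u j) ⬝ᵥ
        ((Km.map (Complex.ofReal)).mulVec (u (j - 1))
          + (K0.map (Complex.ofReal)).mulVec (u j)
          + (Kp.map (Complex.ofReal)).mulVec (u (j + 1)))).re) :
    ∀ θ : ℝ,
      ((K0.map (Complex.ofReal))
        + Complex.exp (-(θ : ℂ) * Complex.I) • (Km.map (Complex.ofReal))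
        + Complex.exp ((θ : ℂ) * Complex.I) • (Kp.map (Complex.ofReal))).IsHermitian
      ∧
      ((K0.map (Complex.ofReal))
        + Complex.exp (-(θ : ℂ) * Complex.I) • (Km.map (Complex.ofReal))
        + Complex.exp ((θ : ℂ) * Complex.I) • (Kp.map (Complex.ofReal))).PosSemidef := by
  intro θ
  have hA : (Km.map ofReal)ᴴ = Kp.map ofReal := by rw [conjTranspose_map_ofReal, hKm]
  have hB : (K0.map ofReal)ᴴ = K0.map ofReal := by rw [conjTranspose_map_ofReal, hK0]
  exact ⟨isHermitian_blockSymbol hA hB θ, posSemidef_blockSymbol hA hB hpos θ⟩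
end

section
/- Let Δt > 0, a ∈ ℝ, and let f : ℝ → ℝ be twice continuously differentiable on a neighborhood of a with f(a) > 0, f'(a) = 0, f''(a) < 0, and f(a)·Δt² = 4. Then the group-velocity expression V(ξ) = f'(ξ)/(√(4 − f(ξ)·Δt²)·√(f(ξ))) tends to √(−2·f''(a))/(Δt·√(f(a))) as ξ → a from the left; in particular this limit is a strictly positive real number. -/
open Filter Topology

/-!
Since `f a * Δt ^ 2 = 4`, the first factor of the denominator is `Δt * √(f a - f ξ)`, so both
numerator and denominator of `V` vanish at `a`. Near a nondegenerate maximum,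
`f' ξ ≈ f''(a) (ξ - a)` while `√(f a - f ξ) ≈ √(-f''(a) / 2) |ξ - a|`: the two first-order zeros
cancel and `f' / √(f a - f)` tends to `-f''(a) / √(-f''(a) / 2) = √(-2 f''(a))` from the left.
-/

theorem tendsto_div_sub_nhdsNE_of_hasDerivAt {g : ℝ → ℝ} {a b : ℝ} (hg : HasDerivAt g b a)
    (hga : g a = 0) : Tendsto (fun x => g x / (x - a)) (𝓝[≠] a) (𝓝 b) := by
  refine (hasDerivAt_iff_tendsto_slope.mp hg).congr fun x => ?_
  simp [slope_def_field, hga]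

theorem neg_div_sqrt_neg_half {b : ℝ} (hb : b < 0) : -b / √(-(b / 2)) = √(-2 * b) := by
  have hmul : √(-2 * b) * √(-(b / 2)) = -b := by
    rw [← Real.sqrt_mul (by linarith), show -2 * b * -(b / 2) = b ^ 2 by ring,
      Real.sqrt_sq_eq_abs, abs_of_neg hb]
  rw [← hmul, mul_div_cancel_right₀ _ (Real.sqrt_pos.mpr (by linarith)).ne']

section CriticalPoint

variable {f : ℝ → ℝ} {a b : ℝ}

theorem tendsto_sub_div_sq_nhdsNE_of_hasDerivAt_deriv
    (hdf : ∀ᶠ x in 𝓝 a, DifferentiableAt ℝ f x) (hf' : deriv f a = 0)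
    (hf'' : HasDerivAt (deriv f) b a) :
    Tendsto (fun x => (f x - f a) / (x - a) ^ 2) (𝓝[≠] a) (𝓝 (b / 2)) := by
  have hnum : ∀ᶠ x in 𝓝[≠] a, HasDerivAt (fun y => f y - f a) (deriv f x) x :=
    (eventually_nhdsWithin_of_eventually_nhds hdf).mono fun x hx => hx.hasDerivAt.sub_const _
  have hden : ∀ᶠ x in 𝓝[≠] a, HasDerivAt (fun y => (y - a) ^ 2) (2 * (x - a)) x :=
    Eventually.of_forall fun x => by simpa using ((hasDerivAt_id x).sub_const a).fun_pow 2
  have hden' : ∀ᶠ x in 𝓝[≠] a, 2 * (x - a) ≠ 0 :=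
    eventually_mem_nhdsWithin.mono fun x hx => mul_ne_zero two_ne_zero (sub_ne_zero.mpr hx)
  have hf_cont : ContinuousAt f a := hdf.self_of_nhds.continuousAt
  have hnum₀ : Tendsto (fun y => f y - f a) (𝓝[≠] a) (𝓝 0) :=
    tendsto_sub_nhds_zero_iff.mpr (hf_cont.tendsto.mono_left nhdsWithin_le_nhds)
  have hden₀ : Tendsto (fun y : ℝ => (y - a) ^ 2) (𝓝[≠] a) (𝓝 0) := by
    have : Continuous fun y : ℝ => (y - a) ^ 2 := by fun_prop
    simpa using (this.tendsto a).mono_left nhdsWithin_le_nhds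
  refine HasDerivAt.lhopital_zero_nhdsNE hnum hden hden' hnum₀ hden₀ ?_
  simpa [div_div, mul_comm] using (tendsto_div_sub_nhdsNE_of_hasDerivAt hf'' hf').div_const 2

theorem tendsto_deriv_div_sqrt_sub_nhdsLT
    (hdf : ∀ᶠ x in 𝓝 a, DifferentiableAt ℝ f x) (hf' : deriv f a = 0)
    (hf'' : HasDerivAt (deriv f) b a) (hb : b < 0) :
    Tendsto (fun x => deriv f x / √(f a - f x)) (𝓝[<] a) (𝓝 √(-2 * b)) := by
  have hLT : 𝓝[<] a ≤ 𝓝[≠] a := nhdsWithin_mono a fun x hx => ne_of_lt hx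
  set q := fun x => (f x - f a) / (x - a) ^ 2
  have hq : Tendsto q (𝓝[<] a) (𝓝 (b / 2)) :=
    (tendsto_sub_div_sq_nhdsNE_of_hasDerivAt_deriv hdf hf' hf'').mono_left hLT
  have hslope : Tendsto (fun x => deriv f x / (x - a)) (𝓝[<] a) (𝓝 b) :=
    (tendsto_div_sub_nhdsNE_of_hasDerivAt hf'' hf').mono_left hLT
  have hlim := hslope.neg.div hq.neg.sqrt (Real.sqrt_pos.mpr (by linarith)).ne'
  rw [neg_div_sqrt_neg_half hb] at hlim
  refine hlim.congr' ?_
  have hq_neg : ∀ᶠ x in 𝓝[<] a, q x < 0 := hq.eventually (eventually_lt_nhds (by linarith))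
  filter_upwards [hq_neg, self_mem_nhdsWithin] with x hqx (hxa : x < a)
  have hsplit : f a - f x = -q x * (a - x) ^ 2 := by
    simp only [q]
    field_simp [(sub_neg.mpr hxa).ne]
    ring
  rw [hsplit, Real.sqrt_mul (by linarith), Real.sqrt_sq (by linarith), Pi.div_apply]
  field_simp [(sub_neg.mpr hxa).ne, (sub_pos.mpr hxa).ne']
  ring

end CriticalPoint

/-- Critical case of the group-velocity limits: if `f` is `C²` near `a` with
`f(a) > 0`, `f'(a) = 0`, `f''(a) < 0` and `f(a)·Δt² = 4`, then the numerical
group velocity `V(ξ) = f'(ξ)/(√(4 − f(ξ)Δt²)·√(f(ξ)))` tends, as `ξ → a⁻`,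
to the strictly positive value `√(−2f''(a))/(Δt·√(f(a)))`. -/
theorem group_velocity_critical_case
    (Δt a : ℝ) (hΔt : 0 < Δt)
    (f : ℝ → ℝ) (hf : ContDiffAt ℝ 2 f a)
    (hpos : 0 < f a)
    (hderiv : deriv f a = 0)
    (hconc : deriv (deriv f) a < 0)
    (hcrit : f a * Δt ^ 2 = 4) :
    Tendsto (fun ξ : ℝ =>
        deriv f ξ / (Real.sqrt (4 - f ξ * Δt ^ 2) * Real.sqrt (f ξ)))
      (𝓝[<] a)
      (𝓝 (Real.sqrt (-2 * deriv (deriv f) a) / (Δt * Real.sqrt (f a))))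
    ∧ 0 < Real.sqrt (-2 * deriv (deriv f) a) / (Δt * Real.sqrt (f a)) := by
  have hdf : ∀ᶠ x in 𝓝 a, DifferentiableAt ℝ f x :=
    (hf.eventually (by simp)).mono fun x hx => hx.differentiableAt (by simp)
  have hf'' : HasDerivAt (deriv f) (deriv (deriv f) a) a :=
    ((hf.derivWithin (m := 1) (by norm_num)).differentiableAt (by simp)).hasDerivAt
  have hsqrt_f : Tendsto (fun x => √(f x)) (𝓝[<] a) (𝓝 √(f a)) :=
    (hf.continuousAt.tendsto.mono_left nhdsWithin_le_nhds).sqrt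
  have hV : ∀ x, deriv f x / (√(4 - f x * Δt ^ 2) * √(f x)) =
      deriv f x / √(f a - f x) / (Δt * √(f x)) := fun x => by
    rw [← hcrit, show f a * Δt ^ 2 - f x * Δt ^ 2 = Δt ^ 2 * (f a - f x) by ring,
      Real.sqrt_mul (sq_nonneg Δt), Real.sqrt_sq hΔt.le, div_div]
    ring
  refine ⟨?_, div_pos (Real.sqrt_pos.mpr (by linarith)) (by positivity)⟩
  simp only [hV]
  exact (tendsto_deriv_div_sqrt_sub_nhdsLT hdf hderiv hf'' hconc).div
    (tendsto_const_nhds.mul hsqrt_f) (by positivity)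
end

section
/- Let h > 0, set σ(ξ) = (4/h²)·sin²(ξ·h/2) and Δt = h. Then for every ξ ∈ (0, π/h), σ'(ξ)/(√(4 − σ(ξ)·h²)·√(σ(ξ))) = 1; in particular this group-velocity expression tends to 1 as ξ → (π/h)⁻. -/
open Filter Topology Real

/-!
Write `θ = ξh/2`. Then `σ' = (4/h) sin θ cos θ`, `4 - σh² = (2 cos θ)²` and `σ = ((2/h) sin θ)²`.
For `ξ ∈ (0, π/h)` we have `θ ∈ (0, π/2)`, so both square roots are roots of squares of positive
numbers and the quotient is `(4/h) sin θ cos θ / ((2 cos θ)((2/h) sin θ)) = 1`. Being identically `1`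
on a left neighbourhood of `π/h`, the group velocity tends to `1` there.
-/

theorem hasDerivAt_dispersion (h ξ : ℝ) :
    HasDerivAt (fun x => 4 / h ^ 2 * sin (x * h / 2) ^ 2)
      (4 / h * (sin (ξ * h / 2) * cos (ξ * h / 2))) ξ := by
  have hθ : HasDerivAt (fun x : ℝ => x * h / 2) (h / 2) ξ := by
    simpa using ((hasDerivAt_id ξ).mul_const h).div_const 2
  refine ((((hasDerivAt_sin _).comp ξ hθ).pow 2).const_mul (4 / h ^ 2)).congr_deriv ?_
  rcases eq_or_ne h 0 with rfl | hh
  · simp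
  · simp only [Function.comp_apply]
    field_simp
    ring

theorem sqrt_four_sub_dispersion_mul_sq {h : ℝ} (hh : h ≠ 0) {θ : ℝ} (hθ : 0 ≤ cos θ) :
    √(4 - 4 / h ^ 2 * sin θ ^ 2 * h ^ 2) = 2 * cos θ := by
  have hsq : 4 - 4 / h ^ 2 * sin θ ^ 2 * h ^ 2 = (2 * cos θ) ^ 2 := by
    field_simp
    rw [cos_sq']
    ring
  rw [hsq, sqrt_sq (by positivity)]

theorem sqrt_dispersion {h : ℝ} (hh : 0 ≤ h) {θ : ℝ} (hθ : 0 ≤ sin θ) :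
    √(4 / h ^ 2 * sin θ ^ 2) = 2 / h * sin θ := by
  rw [show 4 / h ^ 2 * sin θ ^ 2 = (2 / h * sin θ) ^ 2 by ring, sqrt_sq (by positivity)]

theorem dispersion_groupVelocity_eq_one {h : ℝ} (hh : 0 < h) {ξ : ℝ} (hξ : ξ ∈ Set.Ioo 0 (π / h)) :
    deriv (fun x => 4 / h ^ 2 * sin (x * h / 2) ^ 2) ξ /
        (√(4 - 4 / h ^ 2 * sin (ξ * h / 2) ^ 2 * h ^ 2) * √(4 / h ^ 2 * sin (ξ * h / 2) ^ 2)) = 1 := by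
  have hθ_pos : 0 < ξ * h / 2 := by nlinarith [hξ.1]
  have hθ_lt : ξ * h / 2 < π / 2 := by
    have := (lt_div_iff₀ hh).mp hξ.2
    linarith
  have hsin : 0 < sin (ξ * h / 2) := sin_pos_of_pos_of_lt_pi hθ_pos (by linarith [pi_pos])
  have hcos : 0 < cos (ξ * h / 2) := cos_pos_of_mem_Ioo ⟨by linarith, hθ_lt⟩
  rw [(hasDerivAt_dispersion h ξ).deriv, sqrt_four_sub_dispersion_mul_sq hh.ne' hcos.le,
    sqrt_dispersion hh.le hsin.le]
  generalize ξ * h / 2 = θ at hsin hcos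
  field_simp
  norm_num

/-- Exceptional case `(k, Δt) = (0, h)` of the group-velocity theorem:
for `σ(ξ) = (4/h²)·sin²(ξh/2)` and `Δt = h`, the numerical group velocity
`σ'(ξ)/(√(4 − σ(ξ)h²)·√(σ(ξ)))` is identically `1` on `(0, π/h)`; in
particular it tends to `1` as `ξ → (π/h)⁻`. -/
theorem p0_critical_unit_group_velocity
    (h : ℝ) (hh : 0 < h)
    (σ : ℝ → ℝ)
    (hσ : ∀ ξ : ℝ, σ ξ = (4 / h ^ 2) * Real.sin (ξ * h / 2) ^ 2) :
    (∀ ξ ∈ Set.Ioo 0 (π / h),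
        deriv σ ξ / (Real.sqrt (4 - σ ξ * h ^ 2) * Real.sqrt (σ ξ)) = 1)
    ∧ Tendsto
        (fun ξ : ℝ => deriv σ ξ / (Real.sqrt (4 - σ ξ * h ^ 2) * Real.sqrt (σ ξ)))
        (𝓝[<] (π / h)) (𝓝 1) := by
  obtain rfl : σ = fun x => 4 / h ^ 2 * sin (x * h / 2) ^ 2 := funext hσ
  have hone : ∀ ξ ∈ Set.Ioo 0 (π / h), _ := fun ξ hξ => dispersion_groupVelocity_eq_one hh hξ
  exact ⟨hone, (eventuallyEq_of_mem (Ioo_mem_nhdsLT (by positivity)) hone).tendsto⟩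
end

section
/- For all natural numbers p ≥ 1 and m with m ≤ p, and every real s ≥ 1, one has (choose(p, m))·((2p − m − 1)!)/((p − 1)!)·(m!)^s ≤ p·4^p·(p!)^s, where the binomial coefficient and all factorials are regarded as real numbers. -/
lemma choose_le_two_pow' (n k : ℕ) : n.choose k ≤ 2 ^ n := by
  rcases le_or_gt k n with h | h
  · calc n.choose k ≤ ∑ i ∈ Finset.range (n+1), n.choose i := by
          exact Finset.single_le_sum (fun i _ => Nat.zero_le _)
            (Finset.mem_range.mpr (Nat.lt_succ_of_le h))
      _ = 2 ^ n := Nat.sum_range_choose n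
  · rw [Nat.choose_eq_zero_of_lt h]; exact Nat.zero_le _

lemma gevrey_nat_bound (p m : ℕ) (hp : 1 ≤ p) (hm : m ≤ p) :
    p.choose m * (2 * p - m - 1).factorial * m.factorial
      ≤ p * 4 ^ p * (p - 1).factorial * p.factorial := by
  have h2 : 2 * p - m - 1 = (p - 1) + (p - m) := by omega
  have hk : p - 1 ≤ (p - 1) + (p - m) := Nat.le_add_right _ _
  have hfac : ((p-1) + (p-m)).choose (p-1) * (p-1).factorial * (p-m).factorial
      = ((p-1) + (p-m)).factorial := by
    have := Nat.choose_mul_factorial_mul_factorial hk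
    rwa [Nat.add_sub_cancel_left] at this
  have hpm : p.choose m * m.factorial * (p - m).factorial = p.factorial :=
    Nat.choose_mul_factorial_mul_factorial hm
  have hch : ((p-1) + (p-m)).choose (p-1) ≤ 4 ^ p := by
    calc ((p-1) + (p-m)).choose (p-1) ≤ 2 ^ ((p-1)+(p-m)) := choose_le_two_pow' _ _
      _ ≤ 2 ^ (2*p) := Nat.pow_le_pow_right (by norm_num) (by omega)
      _ = 4 ^ p := by rw [pow_mul]; norm_num
  calc p.choose m * (2 * p - m - 1).factorial * m.factorial
      = p.choose m * (((p-1) + (p-m)).choose (p-1) * (p-1).factorial * (p-m).factorial) * m.factorial := by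
        rw [h2, hfac]
    _ = (p.choose m * m.factorial * (p-m).factorial) * (((p-1) + (p-m)).choose (p-1) * (p-1).factorial) := by ring
    _ = p.factorial * (((p-1) + (p-m)).choose (p-1) * (p-1).factorial) := by rw [hpm]
    _ ≤ p.factorial * (4 ^ p * (p-1).factorial) := by
        exact Nat.mul_le_mul_left _ (Nat.mul_le_mul_right _ hch)
    _ ≤ p * 4 ^ p * (p-1).factorial * p.factorial := by
        calc p.factorial * (4 ^ p * (p-1).factorial)
            = 1 * 4 ^ p * (p-1).factorial * p.factorial := by ring
          _ ≤ p * 4 ^ p * (p-1).factorial * p.factorial := by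
              exact Nat.mul_le_mul_right _ (Nat.mul_le_mul_right _ (Nat.mul_le_mul_right _ hp))

/-- Combinatorial bound for the adjoint non-stationary-phase coefficients:
for `p ≥ 1`, `m ≤ p`, and a Gevrey index `s ≥ 1`,
`C(p,m)·(2p−m−1)!/(p−1)!·(m!)^s ≤ p·4^p·(p!)^s`. -/
theorem gevrey_coefficient_bound
    (p m : ℕ) (hp : 1 ≤ p) (hm : m ≤ p) (s : ℝ) (hs : 1 ≤ s) :
    (p.choose m : ℝ) * (Nat.factorial (2 * p - m - 1) : ℝ)
        / (Nat.factorial (p - 1) : ℝ) * ((Nat.factorial m : ℝ) ^ s)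
      ≤ (p : ℝ) * 4 ^ p * ((Nat.factorial p : ℝ) ^ s) := by
  have hm0 : (0:ℝ) < (Nat.factorial m : ℝ) := by exact_mod_cast m.factorial_pos
  have hp0 : (0:ℝ) < (Nat.factorial p : ℝ) := by exact_mod_cast p.factorial_pos
  have hq0 : (0:ℝ) < (Nat.factorial (p-1) : ℝ) := by exact_mod_cast (p-1).factorial_pos
  have hmp : (Nat.factorial m : ℝ) ≤ (Nat.factorial p : ℝ) := by
    exact_mod_cast Nat.factorial_le hm
  have key : (Nat.factorial m : ℝ) ^ s
      ≤ (Nat.factorial m : ℝ) * ((Nat.factorial p : ℝ) ^ s / (Nat.factorial p : ℝ)) := by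
    have e1 : (Nat.factorial m : ℝ) ^ s
        = (Nat.factorial m : ℝ) * (Nat.factorial m : ℝ) ^ (s - 1) := by
      rw [show s = 1 + (s - 1) from by ring,
        Real.rpow_one_add' (le_of_lt hm0) (by intro h; linarith)]
      ring_nf
    have e2 : (Nat.factorial p : ℝ) ^ (s - 1)
        = (Nat.factorial p : ℝ) ^ s / (Nat.factorial p : ℝ) := by
      rw [Real.rpow_sub hp0, Real.rpow_one]
    rw [e1, ← e2]
    exact mul_le_mul_of_nonneg_left
      (Real.rpow_le_rpow (le_of_lt hm0) hmp (by linarith)) (le_of_lt hm0)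
  have hnat : (p.choose m : ℝ) * (Nat.factorial (2*p-m-1) : ℝ) * (Nat.factorial m : ℝ)
      ≤ (p:ℝ) * 4^p * (Nat.factorial (p-1) : ℝ) * (Nat.factorial p : ℝ) := by
    exact_mod_cast gevrey_nat_bound p m hp hm
  have hpow : (0:ℝ) ≤ (Nat.factorial p : ℝ) ^ s := Real.rpow_nonneg (le_of_lt hp0) s
  calc (p.choose m : ℝ) * (Nat.factorial (2 * p - m - 1) : ℝ)
        / (Nat.factorial (p - 1) : ℝ) * ((Nat.factorial m : ℝ) ^ s)
      ≤ (p.choose m : ℝ) * (Nat.factorial (2 * p - m - 1) : ℝ)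
        / (Nat.factorial (p - 1) : ℝ)
        * ((Nat.factorial m : ℝ) * ((Nat.factorial p : ℝ) ^ s / (Nat.factorial p : ℝ))) := by
        exact mul_le_mul_of_nonneg_left key (by positivity)
    _ = (p.choose m : ℝ) * (Nat.factorial (2 * p - m - 1) : ℝ) * (Nat.factorial m : ℝ)
        / ((Nat.factorial (p - 1) : ℝ) * (Nat.factorial p : ℝ))
        * ((Nat.factorial p : ℝ) ^ s) := by ring
    _ ≤ (p : ℝ) * 4 ^ p * ((Nat.factorial p : ℝ) ^ s) := by
        apply mul_le_mul_of_nonneg_right _ hpow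
        rw [div_le_iff₀ (by positivity)]
        nlinarith [hnat]
end
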